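/- arXiv:2102.10392 — 3 statements merged into one kernel-verified Lean document; each statement's English description precedes it below -/
import Mathlib

section
/- Let A be the 3-dimensional complex algebra with basis e_1, e_2, e_3 and nonzero products e_1 e_1 = e_2, e_2 e_1 = e_3, e_2 e_2 = e_3 (all other products of basis vectors zero). Then the annihilator of A is the span of e_3, and the automorphism group of A consists exactly of the linear maps with matrix I + x E_{31} for x ∈ ℂ (in the basis e_1, e_2, e_3), where E_{31} is the matrix unit. -/
/-- The multiplication of the 3-dimensional complex algebra with
`e_1 e_1 = e_2`, `e_2 e_1 = e_3`, `e_2 e_2 = e_3` and all other basis products zero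
(indices shifted to `0,1,2`). -/
noncomputable def mulR3 (v w : Fin 3 → ℂ) : Fin 3 → ℂ :=
  (Pi.single 1 (v 0 * w 0) : Fin 3 → ℂ) +
  (Pi.single 2 (v 1 * w 0 + v 1 * w 1) : Fin 3 → ℂ)

lemma mulR3_apply0 (v w : Fin 3 → ℂ) : mulR3 v w 0 = 0 := by
  simp [mulR3, Pi.single_apply]

lemma mulR3_apply1 (v w : Fin 3 → ℂ) : mulR3 v w 1 = v 0 * w 0 := by
  simp [mulR3, Pi.single_apply]

lemma mulR3_apply2 (v w : Fin 3 → ℂ) : mulR3 v w 2 = v 1 * w 0 + v 1 * w 1 := by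
  simp [mulR3, Pi.single_apply]

/-- For the algebra `e_1² = e_2`, `e_2 e_1 = e_3`, `e_2² = e_3`:
the annihilator is the span of `e_3`, and the automorphisms are exactly the linear maps
with matrix `I + x E₃₁`, `x ∈ ℂ`. -/
theorem ann_and_aut_of_R3 :
    (∀ v : Fin 3 → ℂ,
      (∀ w, mulR3 v w = 0 ∧ mulR3 w v = 0) ↔
        v ∈ Submodule.span ℂ {(Pi.single 2 1 : Fin 3 → ℂ)}) ∧
    (∀ φ : (Fin 3 → ℂ) →ₗ[ℂ] (Fin 3 → ℂ),
      (Function.Bijective φ ∧ ∀ v w, φ (mulR3 v w) = mulR3 (φ v) (φ w)) ↔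
        ∃ x : ℂ, ∀ v, φ v = v + (x * v 0) • (Pi.single 2 1 : Fin 3 → ℂ)) := by
  constructor
  · intro v
    rw [Submodule.mem_span_singleton]
    constructor
    · intro h
      have h1 := (h (Pi.single 0 1)).1
      have hv0 : v 0 = 0 := by
        have := congrFun h1 1
        rw [mulR3_apply1] at this
        simpa using this
      have hv1 : v 1 = 0 := by
        have := congrFun h1 2
        rw [mulR3_apply2] at this
        simpa using this
      exact ⟨v 2, by funext i; fin_cases i <;> simp [Pi.single_apply, hv0, hv1]⟩
    · rintro ⟨c, rfl⟩ w
      constructor <;> funext i <;> fin_cases i <;>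
        simp [mulR3_apply0, mulR3_apply1, mulR3_apply2, Pi.single_apply]
  · intro φ
    constructor
    · rintro ⟨hbij, hmul⟩
      set a := φ (Pi.single 0 1) with ha
      set b := φ (Pi.single 1 1) with hb
      set c := φ (Pi.single 2 1) with hc
      have he00 : mulR3 (Pi.single 0 1) (Pi.single 0 1) = (Pi.single 1 1 : Fin 3 → ℂ) := by
        funext i; fin_cases i <;> simp [mulR3, Pi.single_apply]
      have he10 : mulR3 (Pi.single 1 1) (Pi.single 0 1) = (Pi.single 2 1 : Fin 3 → ℂ) := by
        funext i; fin_cases i <;> simp [mulR3, Pi.single_apply]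
      have he11 : mulR3 (Pi.single 1 1) (Pi.single 1 1) = (Pi.single 2 1 : Fin 3 → ℂ) := by
        funext i; fin_cases i <;> simp [mulR3, Pi.single_apply]
      have he01 : mulR3 (Pi.single 0 1) (Pi.single 1 1) = (0 : Fin 3 → ℂ) := by
        funext i; fin_cases i <;> simp [mulR3, Pi.single_apply]
      have h1 : b = mulR3 a a := by rw [hb, ← he00, hmul]
      have h2 : c = mulR3 b a := by rw [hc, ← he10, hmul]
      have h3 : c = mulR3 b b := by rw [hc, ← he11, hmul]
      have h4 : mulR3 a b = 0 := by rw [← hmul, he01, map_zero]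
      have hb0 : b 0 = 0 := by rw [h1, mulR3_apply0]
      have hb1 : b 1 = a 0 * a 0 := by rw [h1, mulR3_apply1]
      have hb2 : b 2 = a 1 * a 0 + a 1 * a 1 := by rw [h1, mulR3_apply2]
      have hc0 : c 0 = 0 := by rw [h2, mulR3_apply0]
      have hc1 : c 1 = 0 := by rw [h2, mulR3_apply1, hb0, zero_mul]
      have hc2 : c 2 = b 1 * a 0 + b 1 * a 1 := by rw [h2, mulR3_apply2]
      have hc2' : c 2 = b 1 * b 1 := by rw [h3, mulR3_apply2, hb0, mul_zero, zero_add]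
      have h42 : a 1 * b 0 + a 1 * b 1 = 0 := by
        have := congrFun h4 2
        rwa [mulR3_apply2] at this
      have hcne : c ≠ 0 := by
        intro hh
        have : Pi.single 2 1 = (0 : Fin 3 → ℂ) := hbij.1 (by rw [← hc, hh, map_zero])
        have := congrFun this 2
        simp at this
      have hc2ne : c 2 ≠ 0 := by
        intro hh
        apply hcne
        funext i; fin_cases i <;> simp [hc0, hc1, hh]
      have ha0ne : a 0 ≠ 0 := by
        intro hh
        apply hc2ne
        rw [hc2, hb1, hh]; ring
      have ha1 : a 1 = 0 := by
        rw [hb0, hb1, mul_zero, zero_add] at h42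
        rcases mul_eq_zero.1 h42 with h | h
        · exact h
        · exact absurd (mul_self_eq_zero.1 h) ha0ne
      have ha0 : a 0 = 1 := by
        have h5 : a 0 * a 0 * a 0 * (a 0 - 1) = 0 := by
          rw [hc2, ha1, mul_zero, add_zero, hb1] at hc2'
          linear_combination -hc2'
        simp [mul_eq_zero, ha0ne, sub_eq_zero] at h5
        exact h5
      have hb1' : b 1 = 1 := by rw [hb1, ha0, mul_one]
      have hb2' : b 2 = 0 := by rw [hb2, ha1]; ring
      have hc2'' : c 2 = 1 := by rw [hc2', hb1', mul_one]
      refine ⟨a 2, fun v => ?_⟩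
      have hv : v = v 0 • (Pi.single 0 1 : Fin 3 → ℂ) + v 1 • (Pi.single 1 1 : Fin 3 → ℂ) +
          v 2 • (Pi.single 2 1 : Fin 3 → ℂ) := by
        funext i; fin_cases i <;> simp [Pi.single_apply]
      calc φ v = v 0 • a + v 1 • b + v 2 • c := by
            conv_lhs => rw [hv]
            simp [ha, hb, hc]
        _ = v + (a 2 * v 0) • (Pi.single 2 1 : Fin 3 → ℂ) := by
            funext i
            fin_cases i <;>
              simp [ha0, ha1, hb0, hb1', hb2', hc0, hc1, hc2'', Pi.single_apply] <;> ring
    · rintro ⟨x, hx⟩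
      constructor
      · rw [Function.bijective_iff_has_inverse]
        refine ⟨fun v => v - (x * v 0) • (Pi.single 2 1 : Fin 3 → ℂ), ?_, ?_⟩
        · intro v
          rw [hx]
          funext i; fin_cases i <;> simp [Pi.single_apply] <;> ring
        · intro v
          rw [hx]
          funext i; fin_cases i <;> simp [Pi.single_apply] <;> ring
      · intro v w
        rw [hx, hx, hx]
        funext i; fin_cases i <;> simp [mulR3, Pi.single_apply] <;> ring
end

section
/- Let A be an (n+1)-dimensional algebra over ℂ with basis e_1,...,e_{n+1} satisfying: the structure constants c_{ij}^k vanish whenever k ≤ max(i,j); ann(A) = span(e_{n+1}); e_1 e_n = 0; e_i² = e_{i+1} for all 1 ≤ i ≤ n. Suppose that every automorphism of A/span(e_{n+1}) has matrix I + x E_{n1} (in the induced basis) for some x ∈ ℂ. Then every automorphism of A has matrix I + x E_{n+1,1} for some x ∈ ℂ in the basis e_1,...,e_{n+1}, and conversely all such maps are automorphisms. -/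
/-- The multiplication on `Fin m → ℂ` determined by structure constants `c`. -/
noncomputable def mulC {m : ℕ} (c : Fin m → Fin m → Fin m → ℂ) (v w : Fin m → ℂ) : Fin m → ℂ :=
  fun k => ∑ i, ∑ j, v i * w j * c i j k

/-- The induced multiplication on the quotient `A / span(e_{n+1})`, expressed in the
basis given by the images of `e_1, …, e_n`. -/
noncomputable def mulQuot {n : ℕ} (c : Fin (n + 1) → Fin (n + 1) → Fin (n + 1) → ℂ)
    (v w : Fin n → ℂ) : Fin n → ℂ :=
  fun k => ∑ i, ∑ j, v i * w j * c i.castSucc j.castSucc k.castSucc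

lemma mulC_add_left {m : ℕ} (c : Fin m → Fin m → Fin m → ℂ) (u v w : Fin m → ℂ) :
    mulC c (u + v) w = mulC c u w + mulC c v w := by
  funext k
  simp [mulC, add_mul, Finset.sum_add_distrib]

lemma mulC_smul_left {m : ℕ} (c : Fin m → Fin m → Fin m → ℂ) (a : ℂ) (u w : Fin m → ℂ) :
    mulC c (a • u) w = a • mulC c u w := by
  funext k
  simp [mulC, Finset.mul_sum, mul_assoc]

lemma mulC_single_single {m : ℕ} (c : Fin m → Fin m → Fin m → ℂ) (i j : Fin m) :
    mulC c (Pi.single i 1) (Pi.single j 1) = fun k => c i j k := by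
  funext k
  simp [mulC, Pi.single_apply]

noncomputable def piQ {n : ℕ} : (Fin (n+1) → ℂ) →ₗ[ℂ] (Fin n → ℂ) :=
  LinearMap.funLeft ℂ ℂ Fin.castSucc

noncomputable def iotaQ {n : ℕ} : (Fin n → ℂ) →ₗ[ℂ] (Fin (n+1) → ℂ) where
  toFun v := (Fin.snoc v 0 : Fin (n+1) → ℂ)
  map_add' u v := by
    funext k
    refine Fin.lastCases ?_ (fun i => ?_) k <;> simp
  map_smul' a v := by
    funext k
    refine Fin.lastCases ?_ (fun i => ?_) k <;> simp

lemma piQ_iotaQ {n : ℕ} (v : Fin n → ℂ) : piQ (iotaQ v) = v := by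
  funext i; simp [piQ, iotaQ, LinearMap.funLeft]

lemma eq_iotaQ_piQ_add {n : ℕ} (u : Fin (n+1) → ℂ) :
    u = iotaQ (piQ u) + u (Fin.last n) • (Pi.single (Fin.last n) 1 : Fin (n+1) → ℂ) := by
  funext k
  refine Fin.lastCases ?_ (fun i => ?_) k
  · simp [iotaQ]
  · simp [iotaQ, piQ, LinearMap.funLeft, Pi.single_apply, (Fin.castSucc_lt_last i).ne]

lemma piQ_single_last {n : ℕ} : piQ (Pi.single (Fin.last n) (1:ℂ)) = 0 := by
  funext i
  simp [piQ, LinearMap.funLeft, Pi.single_apply, (Fin.castSucc_lt_last i).ne]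

lemma piQ_single_castSucc {n : ℕ} (k : Fin n) :
    piQ (Pi.single k.castSucc (1:ℂ)) = Pi.single k 1 := by
  funext i
  simp [piQ, LinearMap.funLeft, Pi.single_apply, Fin.castSucc_inj]

lemma iotaQ_single {n : ℕ} (k : Fin n) :
    iotaQ (Pi.single k (1:ℂ)) = Pi.single k.castSucc 1 := by
  funext j
  refine Fin.lastCases ?_ (fun i => ?_) j
  · simp [iotaQ, Pi.single_apply, (Fin.castSucc_lt_last k).ne']
  · simp [iotaQ, Pi.single_apply, Fin.castSucc_inj]

lemma mulC_apply_eq {n : ℕ} (c : Fin (n + 1) → Fin (n + 1) → Fin (n + 1) → ℂ)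
    (hc : ∀ i j k : Fin (n + 1), k.val ≤ max i.val j.val → c i j k = 0)
    (u v : Fin (n+1) → ℂ) (k : Fin (n+1)) :
    mulC c u v k =
      ∑ i : Fin n, ∑ j : Fin n,
        u i.castSucc * v j.castSucc * c i.castSucc j.castSucc k := by
  have hlast : ∀ i j : Fin (n+1), (i = Fin.last n ∨ j = Fin.last n) → c i j k = 0 := by
    intro i j h
    apply hc
    rcases h with h | h <;> subst h <;> simp [Fin.last] <;> [omega; omega]
  show (∑ i, ∑ j, u i * v j * c i j k) = _
  rw [Fin.sum_univ_castSucc]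
  have h2 : (∑ j : Fin (n+1), u (Fin.last n) * v j * c (Fin.last n) j k) = 0 :=
    Finset.sum_eq_zero fun j _ => by rw [hlast _ _ (Or.inl rfl), mul_zero]
  rw [h2, add_zero]
  apply Finset.sum_congr rfl
  intro i _
  rw [Fin.sum_univ_castSucc, hlast _ _ (Or.inr rfl), mul_zero, add_zero]

lemma mulC_eq_of_piQ_eq {n : ℕ} (c : Fin (n + 1) → Fin (n + 1) → Fin (n + 1) → ℂ)
    (hc : ∀ i j k : Fin (n + 1), k.val ≤ max i.val j.val → c i j k = 0)
    (u u' v v' : Fin (n+1) → ℂ) (hu : piQ u = piQ u') (hv : piQ v = piQ v') :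
    mulC c u v = mulC c u' v' := by
  funext k
  rw [mulC_apply_eq c hc, mulC_apply_eq c hc]
  apply Finset.sum_congr rfl
  intro i _
  apply Finset.sum_congr rfl
  intro j _
  rw [show u i.castSucc = u' i.castSucc from congrFun hu i,
    show v j.castSucc = v' j.castSucc from congrFun hv j]

lemma piQ_mulC {n : ℕ} (c : Fin (n + 1) → Fin (n + 1) → Fin (n + 1) → ℂ)
    (hc : ∀ i j k : Fin (n + 1), k.val ≤ max i.val j.val → c i j k = 0)
    (u v : Fin (n+1) → ℂ) :
    piQ (mulC c u v) = mulQuot c (piQ u) (piQ v) := by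
  funext k
  show mulC c u v k.castSucc = _
  rw [mulC_apply_eq c hc]
  rfl

lemma mulC_apply_zero {n : ℕ} (c : Fin (n + 1) → Fin (n + 1) → Fin (n + 1) → ℂ)
    (hc : ∀ i j k : Fin (n + 1), k.val ≤ max i.val j.val → c i j k = 0)
    (u v : Fin (n+1) → ℂ) : mulC c u v 0 = 0 :=
  Finset.sum_eq_zero fun i _ => Finset.sum_eq_zero fun j _ => by
    rw [hc i j 0 (by simp), mul_zero]

/-- Let `A` be an `(n+1)`-dimensional complex algebra with basis `e_1, …, e_{n+1}` whose
structure constants satisfy `c_{ij}^k = 0` for `k ≤ max(i,j)`, with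
`ann(A) = span(e_{n+1})`, `e_1 e_n = 0` and `e_i² = e_{i+1}` for `1 ≤ i ≤ n`.
If every automorphism of `A / span(e_{n+1})` has matrix `I + x E_{n,1}`,
then the automorphisms of `A` are exactly the maps with matrix `I + x E_{n+1,1}`. -/
theorem aut_of_extension_eq_I_add_xE {n : ℕ} (hn : 2 ≤ n)
    (c : Fin (n + 1) → Fin (n + 1) → Fin (n + 1) → ℂ)
    (hc : ∀ i j k : Fin (n + 1), k.val ≤ max i.val j.val → c i j k = 0)
    (hann : ∀ v : Fin (n + 1) → ℂ,
      (∀ w, mulC c v w = 0 ∧ mulC c w v = 0) ↔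
        ∃ t : ℂ, v = t • (Pi.single (Fin.last n) 1 : Fin (n + 1) → ℂ))
    (h1n : mulC c (Pi.single (0 : Fin (n + 1)) (1 : ℂ))
      (Pi.single (⟨n - 1, by omega⟩ : Fin (n + 1)) (1 : ℂ)) = 0)
    (hsq : ∀ i : Fin n,
      mulC c (Pi.single i.castSucc (1 : ℂ)) (Pi.single i.castSucc (1 : ℂ)) =
        Pi.single i.succ (1 : ℂ))
    (hquot : ∀ ψ : (Fin n → ℂ) →ₗ[ℂ] (Fin n → ℂ),
      Function.Bijective ψ → (∀ v w, ψ (mulQuot c v w) = mulQuot c (ψ v) (ψ w)) →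
      ∃ x : ℂ, ∀ v, ψ v = v + (x * v ⟨0, by omega⟩) •
        (Pi.single (⟨n - 1, by omega⟩ : Fin n) 1 : Fin n → ℂ)) :
    ∀ φ : (Fin (n + 1) → ℂ) →ₗ[ℂ] (Fin (n + 1) → ℂ),
      (Function.Bijective φ ∧ ∀ v w, φ (mulC c v w) = mulC c (φ v) (φ w)) ↔
        ∃ x : ℂ, ∀ v, φ v = v + (x * v 0) •
          (Pi.single (Fin.last n) 1 : Fin (n + 1) → ℂ) := by
  intro φ
  set E : Fin (n+1) → ℂ := Pi.single (Fin.last n) 1 with hE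
  have hlast_ne : (0 : Fin (n+1)) ≠ Fin.last n := by
    intro h
    have := congrArg Fin.val h
    simp [Fin.last] at this
    omega
  have hE0 : E 0 = 0 := Pi.single_eq_of_ne hlast_ne 1
  have hElast : E (Fin.last n) = 1 := Pi.single_eq_same _ _
  have hpiQE : piQ E = 0 := piQ_single_last
  constructor
  · -- hard direction
    rintro ⟨⟨hinj, hsurj⟩, hmul⟩
    -- φ preserves the annihilator, φ E = t • E
    have hφE : ∃ t : ℂ, φ E = t • E := by
      apply (hann _).mp
      intro w
      obtain ⟨u, hu⟩ := hsurj w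
      have hEann : ∀ w', mulC c E w' = 0 ∧ mulC c w' E = 0 :=
        (hann E).mpr ⟨1, (one_smul _ _).symm⟩
      constructor
      · rw [← hu, ← hmul, (hEann u).1, map_zero]
      · rw [← hu, ← hmul, (hEann u).2, map_zero]
    obtain ⟨t, ht⟩ := hφE
    have htne : t ≠ 0 := by
      intro h
      rw [h, zero_smul] at ht
      have : E = 0 := hinj (ht.trans (map_zero φ).symm)
      have := congrFun this (Fin.last n)
      rw [hElast] at this
      exact one_ne_zero this
    -- quotient map
    set ψ : (Fin n → ℂ) →ₗ[ℂ] (Fin n → ℂ) := piQ ∘ₗ φ ∘ₗ iotaQ with hψ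
    have hψ_apply : ∀ v, ψ v = piQ (φ (iotaQ v)) := fun v => rfl
    have hcomm : ∀ u, piQ (φ u) = ψ (piQ u) := by
      intro u
      conv_lhs => rw [eq_iotaQ_piQ_add u]
      rw [map_add, map_smul, ht, map_add, map_smul, map_smul, hpiQE, smul_zero,
        smul_zero, add_zero, hψ_apply]
    -- ψ is multiplicative
    have hψmul : ∀ v w, ψ (mulQuot c v w) = mulQuot c (ψ v) (ψ w) := by
      intro v w
      have h2 : iotaQ (mulQuot c v w) = mulC c (iotaQ v) (iotaQ w)
          - (mulC c (iotaQ v) (iotaQ w)) (Fin.last n) • E := by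
        have h := eq_iotaQ_piQ_add (mulC c (iotaQ v) (iotaQ w))
        rw [piQ_mulC c hc, piQ_iotaQ, piQ_iotaQ] at h
        exact eq_sub_of_add_eq h.symm
      rw [hψ_apply, h2, map_sub, map_smul, hmul, ht, map_sub, map_smul, map_smul,
        hpiQE, smul_zero, smul_zero, sub_zero, piQ_mulC c hc]
      rfl
    -- ψ is bijective
    have hψker : ∀ v, ψ v = 0 → v = 0 := by
      intro v hv
      rw [hψ_apply] at hv
      have h1 := eq_iotaQ_piQ_add (φ (iotaQ v))
      rw [hv, map_zero, zero_add] at h1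
      set r := φ (iotaQ v) (Fin.last n)
      have h2 : φ ((r * t⁻¹) • E) = r • E := by
        rw [map_smul, ht, smul_smul]
        congr 1
        field_simp
      have h3 : iotaQ v = (r * t⁻¹) • E := hinj (h1.trans h2.symm)
      have h4 := congrArg piQ h3
      rw [piQ_iotaQ, map_smul, hpiQE, smul_zero] at h4
      exact h4
    have hψbij : Function.Bijective ψ := by
      constructor
      · intro a b hab
        have := hψker (a - b) (by rw [map_sub, hab, sub_self])
        exact sub_eq_zero.mp this
      · intro w
        obtain ⟨u, hu⟩ := hsurj (iotaQ w)
        exact ⟨piQ u, by rw [← hcomm, hu, piQ_iotaQ]⟩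
    obtain ⟨x, hx⟩ := hquot ψ hψbij hψmul
    -- notation for indices
    set z : Fin n := ⟨0, by omega⟩ with hz
    set p : Fin n := ⟨n - 1, by omega⟩ with hp
    have hzc : z.castSucc = (0 : Fin (n+1)) := rfl
    have hpsucc : p.succ = Fin.last n := by
      apply Fin.ext
      simp [Fin.last, hp]
      omega
    have hpz : p ≠ z := by
      intro h
      have := congrArg Fin.val h
      simp [hp, hz] at this
      omega
    -- piQ (φ (E k.castSucc)) computations
    have hpiQφ : ∀ k : Fin n, piQ (φ (Pi.single k.castSucc 1)) =
        Pi.single k 1 + (x * (Pi.single k 1 : Fin n → ℂ) z) • (Pi.single p 1 : Fin n → ℂ) := by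
      intro k
      rw [hcomm, piQ_single_castSucc, hx]
    have hpiQφ_ne : ∀ k : Fin n, k ≠ z →
        piQ (φ (Pi.single k.castSucc 1)) = Pi.single k 1 := by
      intro k hk
      rw [hpiQφ k, Pi.single_eq_of_ne' hk, mul_zero, zero_smul, add_zero]
    -- t = 1
    have hpiQφp : piQ (φ (Pi.single p.castSucc 1)) = piQ (Pi.single p.castSucc 1) := by
      rw [hpiQφ_ne p hpz, piQ_single_castSucc]
    have ht1 : t = 1 := by
      have h1 : φ (Pi.single (Fin.last n) 1) =
          mulC c (φ (Pi.single p.castSucc 1)) (φ (Pi.single p.castSucc 1)) := by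
        rw [← hmul, hsq p, hpsucc]
      rw [mulC_eq_of_piQ_eq c hc _ _ _ _ hpiQφp hpiQφp, hsq p, hpsucc] at h1
      rw [hE] at ht
      have h2 := ht.symm.trans h1
      have h3 := congrFun h2 (Fin.last n)
      simpa using h3
    -- x = 0
    have hq : (⟨n - 1, by omega⟩ : Fin (n+1)) = p.castSucc := rfl
    have hpiQφ0 : piQ (φ (Pi.single (0 : Fin (n+1)) 1)) =
        piQ ((Pi.single (0 : Fin (n+1)) 1 : Fin (n+1) → ℂ)
          + x • (Pi.single p.castSucc 1 : Fin (n+1) → ℂ)) := by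
      rw [map_add, map_smul, piQ_single_castSucc, ← hzc, piQ_single_castSucc,
        hpiQφ z, Pi.single_eq_same, mul_one]
    have hx0 : x = 0 := by
      have h1 : (0 : Fin (n+1) → ℂ) =
          mulC c (φ (Pi.single (0 : Fin (n+1)) 1)) (φ (Pi.single p.castSucc 1)) := by
        rw [← hmul, ← hq, h1n, map_zero]
      rw [mulC_eq_of_piQ_eq c hc _ _ _ _ hpiQφ0 hpiQφp, mulC_add_left,
        mulC_smul_left, ← hq, h1n, hq, hsq p, hpsucc, zero_add] at h1
      have h2 := congrFun h1 (Fin.last n)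
      simp [Pi.single_eq_same] at h2
      exact h2.symm
    -- now ψ = id
    have hxid : ∀ v, ψ v = v := by
      intro v
      rw [hx, hx0, zero_mul, zero_smul, add_zero]
    -- φ fixes e_j for j ≥ 2 (i.e. j = i.succ)
    have hpiQφ_all : ∀ k : Fin n,
        piQ (φ (Pi.single k.castSucc 1)) = piQ (Pi.single k.castSucc 1) := by
      intro k
      rw [hcomm, hxid]
    have hsucc : ∀ i : Fin n, φ (Pi.single i.succ 1) = Pi.single i.succ 1 := by
      intro i
      rw [← hsq i, hmul, mulC_eq_of_piQ_eq c hc _ _ _ _ (hpiQφ_all i) (hpiQφ_all i),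
        hsq i]
    -- φ (E 0) = E 0 + μ • E
    set μ : ℂ := φ (Pi.single (0 : Fin (n+1)) 1) (Fin.last n) with hμ
    have hφ0 : φ (Pi.single (0 : Fin (n+1)) 1) = Pi.single (0 : Fin (n+1)) 1 + μ • E := by
      conv_lhs => rw [eq_iotaQ_piQ_add (φ (Pi.single (0 : Fin (n+1)) 1))]
      rw [← hzc, hpiQφ_all z, piQ_single_castSucc, iotaQ_single, hzc, ← hμ]
    -- conclude
    refine ⟨μ, ?_⟩
    have hφlast : φ E = E := by rw [ht, ht1, one_smul]
    have hbasis : ∀ k : Fin (n+1),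
        φ (Pi.single k 1) = (Pi.single k 1 : Fin (n+1) → ℂ) + (if k = 0 then μ else 0) • E := by
      intro k
      refine Fin.cases ?_ (fun i => ?_) k
      · simpa using hφ0
      · rw [hsucc i, if_neg (Fin.succ_ne_zero i), zero_smul, add_zero]
    intro v
    have hv : v = ∑ j, v j • (Pi.single j 1 : Fin (n+1) → ℂ) := by
      funext k
      rw [Finset.sum_apply]
      simp [Pi.single_apply]
    have h1 : φ v = ∑ j, v j • φ (Pi.single j 1) := by
      conv_lhs => rw [hv]
      rw [map_sum]
      simp only [map_smul]
    rw [h1]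
    have h2 : ∀ j : Fin (n+1), v j • φ (Pi.single j 1) =
        v j • (Pi.single j 1 : Fin (n+1) → ℂ) + (if j = 0 then v j * μ else 0) • E := by
      intro j
      rw [hbasis j, smul_add, smul_smul, mul_ite, mul_zero]
    rw [Finset.sum_congr rfl fun j _ => h2 j, Finset.sum_add_distrib, ← hv]
    have h3 : (∑ j : Fin (n+1), (if j = 0 then v j * μ else 0) • E) = (μ * v 0) • E := by
      have h4 : ∀ j : Fin (n+1),
          (if j = 0 then v j * μ else 0) • E = if j = 0 then (v j * μ) • E else 0 := by
        intro j; split <;> simp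
      rw [Finset.sum_congr rfl fun j _ => h4 j, Finset.sum_ite_eq']
      simp [mul_comm]
    rw [h3]
  · -- easy direction
    rintro ⟨x, hφ⟩
    have hpiQφ : ∀ v, piQ (φ v) = piQ v := by
      intro v
      rw [hφ, map_add, map_smul, hpiQE, smul_zero, add_zero]
    have hmulC0 : ∀ v w, mulC c v w 0 = 0 := mulC_apply_zero c hc
    constructor
    · constructor
      · intro a b hab
        have h0 : a 0 = b 0 := by
          have h1 := congrFun hab 0
          rw [hφ a, hφ b] at h1
          simpa [hE0] using h1
        have h2 : a + (x * a 0) • E = b + (x * b 0) • E := by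
          rw [← hφ a, ← hφ b, hab]
        rw [h0] at h2
        exact add_right_cancel h2
      · intro v
        refine ⟨v + (-x * v 0) • E, ?_⟩
        rw [hφ]
        have h0 : (v + (-x * v 0) • E) 0 = v 0 := by simp [hE0]
        rw [h0]
        funext k
        simp only [Pi.add_apply, Pi.smul_apply, smul_eq_mul]
        ring
    · intro v w
      rw [hφ (mulC c v w), hmulC0, mul_zero, zero_smul, add_zero]
      exact mulC_eq_of_piQ_eq c hc _ _ _ _ (hpiQφ v).symm (hpiQφ w).symm
end

section
/- Let α ∈ ℂ with α ≠ 0 and let A_α be the 4-dimensional commutative complex algebra with basis e_1,...,e_4 and nonzero products e_1² = e_2, e_1 e_2 = e_2 e_1 = α e_4, e_2² = e_3, e_2 e_3 = e_3 e_2 = e_4, e_3² = e_4 (all other basis products zero). Then the automorphism group of A_α consists exactly of the maps I + x E_{41}, x ∈ ℂ, in the basis e_1,...,e_4. -/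
/-- The multiplication of the 4-dimensional commutative complex algebra `A_α`:
`e_1² = e_2`, `e_1 e_2 = e_2 e_1 = α e_4`, `e_2² = e_3`, `e_2 e_3 = e_3 e_2 = e_4`,
`e_3² = e_4` (indices shifted to `0,…,3`). -/
noncomputable def mulA (α : ℂ) (v w : Fin 4 → ℂ) : Fin 4 → ℂ :=
  (Pi.single 1 (v 0 * w 0) : Fin 4 → ℂ) +
  (Pi.single 2 (v 1 * w 1) : Fin 4 → ℂ) +
  (Pi.single 3 (α * (v 0 * w 1 + v 1 * w 0) + v 1 * w 2 + v 2 * w 1 + v 2 * w 2) : Fin 4 → ℂ)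

lemma mulA_apply0 (α : ℂ) (v w : Fin 4 → ℂ) : mulA α v w 0 = 0 := by
  simp [mulA, Pi.single_apply]
lemma mulA_apply1 (α : ℂ) (v w : Fin 4 → ℂ) : mulA α v w 1 = v 0 * w 0 := by
  simp [mulA, Pi.single_apply]
lemma mulA_apply2 (α : ℂ) (v w : Fin 4 → ℂ) : mulA α v w 2 = v 1 * w 1 := by
  simp [mulA, Pi.single_apply]
lemma mulA_apply3 (α : ℂ) (v w : Fin 4 → ℂ) :
    mulA α v w 3 = α * (v 0 * w 1 + v 1 * w 0) + v 1 * w 2 + v 2 * w 1 + v 2 * w 2 := by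
  simp [mulA, Pi.single_apply]

lemma mulA_e0e0 (α : ℂ) : mulA α (Pi.single 0 1) (Pi.single 0 1) = (Pi.single 1 1 : Fin 4 → ℂ) := by
  funext i; fin_cases i <;>
    simp [mulA_apply0, mulA_apply1, mulA_apply2, mulA_apply3, Pi.single_apply]

lemma mulA_e1e1 (α : ℂ) : mulA α (Pi.single 1 1) (Pi.single 1 1) = (Pi.single 2 1 : Fin 4 → ℂ) := by
  funext i; fin_cases i <;>
    simp [mulA_apply0, mulA_apply1, mulA_apply2, mulA_apply3, Pi.single_apply]

lemma mulA_e1e2 (α : ℂ) : mulA α (Pi.single 1 1) (Pi.single 2 1) = (Pi.single 3 1 : Fin 4 → ℂ) := by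
  funext i; fin_cases i <;>
    simp [mulA_apply0, mulA_apply1, mulA_apply2, mulA_apply3, Pi.single_apply]

lemma mulA_e2e2 (α : ℂ) : mulA α (Pi.single 2 1) (Pi.single 2 1) = (Pi.single 3 1 : Fin 4 → ℂ) := by
  funext i; fin_cases i <;>
    simp [mulA_apply0, mulA_apply1, mulA_apply2, mulA_apply3, Pi.single_apply]

lemma mulA_e0e1 (α : ℂ) :
    mulA α (Pi.single 0 1) (Pi.single 1 1) = α • (Pi.single 3 1 : Fin 4 → ℂ) := by
  funext i; fin_cases i <;>
    simp [mulA_apply0, mulA_apply1, mulA_apply2, mulA_apply3, Pi.single_apply]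

lemma mulA_e0e2 (α : ℂ) : mulA α (Pi.single 0 1) (Pi.single 2 1) = (0 : Fin 4 → ℂ) := by
  funext i; fin_cases i <;>
    simp [mulA_apply0, mulA_apply1, mulA_apply2, mulA_apply3, Pi.single_apply]

lemma aut_of_A_alpha_forward (α : ℂ) (hα : α ≠ 0) (φ : (Fin 4 → ℂ) →ₗ[ℂ] (Fin 4 → ℂ))
    (hbij : Function.Bijective φ)
    (hm : ∀ v w, φ (mulA α v w) = mulA α (φ v) (φ w)) :
    ∃ x : ℂ, ∀ v, φ v = v + (x * v 0) • (Pi.single 3 1 : Fin 4 → ℂ) := by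
  set a := φ (Pi.single 0 1) with ha_def
  set b := φ (Pi.single 1 1) with hb_def
  set c := φ (Pi.single 2 1) with hc_def
  set d := φ (Pi.single 3 1) with hd_def
  have hb : b = mulA α a a := by rw [hb_def, ← mulA_e0e0 α, hm]
  have hc : c = mulA α b b := by rw [hc_def, ← mulA_e1e1 α, hm]
  have hd : d = mulA α b c := by rw [hd_def, ← mulA_e1e2 α, hm]
  have hd' : d = mulA α c c := by rw [hd_def, ← mulA_e2e2 α, hm]
  have hab : α • d = mulA α a b := by
    rw [hd_def, ← map_smul, ← mulA_e0e1 α, hm]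
  have hac : (0 : Fin 4 → ℂ) = mulA α a c := by
    rw [← hm, mulA_e0e2, map_zero]
  -- components
  have b0 : b 0 = 0 := by rw [hb]; exact mulA_apply0 ..
  have b1 : b 1 = a 0 * a 0 := by rw [hb]; exact mulA_apply1 ..
  have b2 : b 2 = a 1 * a 1 := by rw [hb]; exact mulA_apply2 ..
  have c0 : c 0 = 0 := by rw [hc]; exact mulA_apply0 ..
  have c1 : c 1 = 0 := by rw [hc, mulA_apply1, b0, mul_zero]
  have c2 : c 2 = b 1 * b 1 := by rw [hc]; exact mulA_apply2 ..
  have d0 : d 0 = 0 := by rw [hd]; exact mulA_apply0 ..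
  have d1 : d 1 = 0 := by rw [hd, mulA_apply1, b0, zero_mul]
  have d2 : d 2 = 0 := by rw [hd, mulA_apply2, c1, mul_zero]
  have d3 : d 3 = b 1 * c 2 + b 2 * c 2 := by
    rw [hd, mulA_apply3, b0, c0, c1]; ring
  have d3' : d 3 = c 2 * c 2 := by
    rw [hd', mulA_apply3, c0, c1]; ring
  -- d ≠ 0
  have hdne : d 3 ≠ 0 := by
    intro h
    have hzero : d = 0 := by funext i; fin_cases i <;> simp [d0, d1, d2, h]
    have heq := hbij.injective (show φ (Pi.single 3 1) = φ 0 by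
      rw [← hd_def, hzero, map_zero])
    have := congrFun heq 3
    simp [Pi.single_apply] at this
  -- a 0 ≠ 0
  have ha0ne : a 0 ≠ 0 := by
    intro h
    apply hdne
    rw [d3, c2, b1, b2, h]; ring
  -- a 1 = 0 from component 2 of hab
  have hab2 : α * d 2 = a 1 * b 1 := by
    have := congrFun hab 2
    rw [mulA_apply2] at this
    simpa using this
  have ha1 : a 1 = 0 := by
    rw [d2, mul_zero] at hab2
    rcases mul_eq_zero.mp hab2.symm with h | h
    · exact h
    · exact absurd b1 (by rw [h]; exact fun hh => ha0ne (by
        rcases mul_eq_zero.mp hh.symm with h' | h' <;> exact h'))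
  -- a0^2 = 1
  have hd3v : d 3 = a 0 ^ 6 := by rw [d3, c2, b1, b2, ha1]; ring
  have hsq : a 0 ^ 2 = 1 := by
    have h8 : a 0 ^ 6 = a 0 ^ 8 := by
      rw [← hd3v, d3', c2, b1]; ring
    have : a 0 ^ 6 * (a 0 ^ 2 - 1) = 0 := by linear_combination -h8
    rcases mul_eq_zero.mp this with h | h
    · exact absurd h (pow_ne_zero _ ha0ne)
    · linear_combination h
  -- a 2 = 0 from component 3 of hac
  have hac3 : (0:ℂ) = α * (a 0 * c 1 + a 1 * c 0) + a 1 * c 2 + a 2 * c 1 + a 2 * c 2 := by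
    have := congrFun hac 3
    rw [mulA_apply3] at this
    simpa using this
  have ha2 : a 2 = 0 := by
    rw [c0, c1, ha1, c2, b1] at hac3
    have h4 : a 0 ^ 4 ≠ 0 := pow_ne_zero _ ha0ne
    have : a 2 * a 0 ^ 4 = 0 := by linear_combination -hac3
    rcases mul_eq_zero.mp this with h | h
    · exact h
    · exact absurd h h4
  -- a 0 = 1 from component 3 of hab
  have hab3 : α * d 3 = α * (a 0 * b 1 + a 1 * b 0) + a 1 * b 2 + a 2 * b 1 + a 2 * b 2 := by
    have := congrFun hab 3
    rw [mulA_apply3] at this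
    simpa using this
  have ha0 : a 0 = 1 := by
    rw [hd3v, b0, b1, b2, ha1, ha2] at hab3
    have hcube : a 0 ^ 3 = 1 := by
      have h6 : a 0 ^ 6 = 1 := by linear_combination (a 0 ^ 4 + a 0 ^ 2 + 1) * hsq
      have : α * (a 0 ^ 3 - 1) = 0 := by linear_combination -hab3 + α * h6
      rcases mul_eq_zero.mp this with h | h
      · exact absurd h hα
      · linear_combination h
    linear_combination hcube - a 0 * hsq
  -- now determine φ on basis
  have hφ1 : b = (Pi.single 1 1 : Fin 4 → ℂ) := by
    rw [hb]
    funext i; fin_cases i <;>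
      simp [mulA_apply0, mulA_apply1, mulA_apply2, mulA_apply3, ha0, ha1, ha2, Pi.single_apply]
  have hφ2 : c = (Pi.single 2 1 : Fin 4 → ℂ) := by
    rw [hc, hφ1, mulA_e1e1]
  have hφ3 : d = (Pi.single 3 1 : Fin 4 → ℂ) := by
    rw [hd, hφ1, hφ2, mulA_e1e2]
  refine ⟨a 3, fun v => ?_⟩
  have hv : v = v 0 • (Pi.single 0 1 : Fin 4 → ℂ) + v 1 • (Pi.single 1 1 : Fin 4 → ℂ) +
      v 2 • (Pi.single 2 1 : Fin 4 → ℂ) + v 3 • (Pi.single 3 1 : Fin 4 → ℂ) := by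
    funext i; fin_cases i <;> simp [Pi.single_apply]
  calc φ v = v 0 • a + v 1 • b + v 2 • c + v 3 • d := by
        conv_lhs => rw [hv]
        simp only [map_add, map_smul, ← ha_def, ← hb_def, ← hc_def, ← hd_def]
    _ = v + (a 3 * v 0) • (Pi.single 3 1 : Fin 4 → ℂ) := by
        rw [hφ1, hφ2, hφ3]
        funext i; fin_cases i <;> simp [Pi.single_apply, ha0, ha1, ha2] <;> ring

/-- For `α ≠ 0`, the automorphism group of `A_α` consists exactly of the maps
`I + x E₄₁`, `x ∈ ℂ`. -/
theorem aut_of_A_alpha (α : ℂ) (hα : α ≠ 0) :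
    ∀ φ : (Fin 4 → ℂ) →ₗ[ℂ] (Fin 4 → ℂ),
      (Function.Bijective φ ∧ ∀ v w, φ (mulA α v w) = mulA α (φ v) (φ w)) ↔
        ∃ x : ℂ, ∀ v, φ v = v + (x * v 0) • (Pi.single 3 1 : Fin 4 → ℂ) := by
  intro φ
  constructor
  · rintro ⟨hbij, hm⟩
    exact aut_of_A_alpha_forward α hα φ hbij hm
  · rintro ⟨x, hφ⟩
    constructor
    · rw [Function.bijective_iff_has_inverse]
      refine ⟨fun v => v + (-(x * v 0)) • (Pi.single 3 1 : Fin 4 → ℂ),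
        fun u => ?_, fun u => ?_⟩ <;>
        · funext i; fin_cases i <;> simp [hφ, Pi.single_apply]
    · intro v w
      funext i
      fin_cases i <;>
        simp [hφ, mulA_apply0, mulA_apply1, mulA_apply2, mulA_apply3, Pi.single_apply] <;> ring
end
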